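/- Fix d ≥ 1, a symmetric positive definite d×d real matrix C, a vector a ∈ ℝ^d, and reals σ_U > 0, σ̃_V > 0, g > 0, m ∈ ℝ. For ρ ∈ ℝ^d with ρᵀC⁻¹ρ < 1 define σ̃_U(ρ) = σ_U g √(1 − ρᵀC⁻¹ρ), ζ(ρ) = g σ_U ρᵀC⁻¹a, σ(ρ) = √(σ̃_V² + σ̃_U(ρ)²), λ(ρ) = σ̃_U(ρ)/σ̃_V, ξ(ρ) = ζ(ρ)/(λ(ρ)σ(ρ)), and for ε ∈ ℝ with ω = ε − m, f(ε; ρ) = (1/σ(ρ))[Φ(ξ(ρ) − λ(ρ)ω/σ(ρ)) φ((ω + ζ(ρ))/σ(ρ)) + Φ(−ξ(ρ) − λ(ρ)ω/σ(ρ)) φ((ω − ζ(ρ))/σ(ρ))]. Then for every ε ∈ ℝ, the map ρ ↦ log f(ε; ρ) is differentiable at ρ = 0 and its gradient at ρ = 0 is the zero vector of ℝ^d. That is, the score of the log-likelihood with respect to the dependence parameter ρ_U vanishes identically at ρ_U = 0, so the model is not first-order identified there. -/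

import Mathlib

/-! Replacing `ρ` by `-ρ` leaves the quadratic form `ρᵀC⁻¹ρ`, hence `σ̃_U`, `σ` and `λ`, unchanged
and flips the sign of `ζ` and `ξ`, which swaps the two summands of `f`. So `ρ ↦ log f(ε; ρ)` is
even, and an even function differentiable at `0` has zero derivative there. -/

open Matrix MeasureTheory

/-- The standard normal density. -/
noncomputable def stdNormalPDF (x : ℝ) : ℝ :=
  (Real.sqrt (2 * Real.pi))⁻¹ * Real.exp (-x ^ 2 / 2)

/-- The standard normal cumulative distribution function. -/
noncomputable def stdNormalCDF (x : ℝ) : ℝ :=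
  ∫ t in Set.Iio x, stdNormalPDF t

/-- The closed-form conditional density of the composite error term given the control
functions in the normal–folded-normal stochastic frontier model, viewed as a function of
the dependence-parameter vector `ρ`. -/
noncomputable def densF (d : ℕ) (C : Matrix (Fin d) (Fin d) ℝ) (a : Fin d → ℝ)
    (σU σV g m : ℝ) (ρ : Fin d → ℝ) (ε : ℝ) : ℝ :=
  let sU : ℝ := σU * g * Real.sqrt (1 - ρ ⬝ᵥ (C⁻¹ *ᵥ ρ))
  let ζ : ℝ := g * σU * (ρ ⬝ᵥ (C⁻¹ *ᵥ a))
  let σ : ℝ := Real.sqrt (σV ^ 2 + sU ^ 2)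
  let lam : ℝ := sU / σV
  let ξ : ℝ := ζ / (lam * σ)
  let ω : ℝ := ε - m
  (1 / σ) * (stdNormalCDF (ξ - lam * ω / σ) * stdNormalPDF ((ω + ζ) / σ) +
    stdNormalCDF (-ξ - lam * ω / σ) * stdNormalPDF ((ω - ζ) / σ))

open ProbabilityTheory

lemma stdNormalPDF_eq_gaussianPDFReal : stdNormalPDF = gaussianPDFReal 0 1 := by
  ext x
  simp [stdNormalPDF, gaussianPDFReal]

lemma stdNormalPDF_pos (x : ℝ) : 0 < stdNormalPDF x := by
  rw [stdNormalPDF_eq_gaussianPDFReal]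
  exact gaussianPDFReal_pos 0 1 x one_ne_zero

lemma integrable_stdNormalPDF : Integrable stdNormalPDF :=
  stdNormalPDF_eq_gaussianPDFReal ▸ integrable_gaussianPDFReal 0 1

@[fun_prop]
lemma differentiable_stdNormalPDF : Differentiable ℝ stdNormalPDF := by
  unfold stdNormalPDF
  fun_prop

lemma stdNormalCDF_eq_add_intervalIntegral (x : ℝ) :
    stdNormalCDF x = stdNormalCDF 0 + ∫ t in (0 : ℝ)..x, stdNormalPDF t := by
  have h := intervalIntegral.integral_Iic_sub_Iic (a := 0) (b := x)
    integrable_stdNormalPDF.integrableOn integrable_stdNormalPDF.integrableOn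
  simp only [stdNormalCDF, ← integral_Iic_eq_integral_Iio] at h ⊢
  linarith

lemma hasDerivAt_stdNormalCDF (x : ℝ) : HasDerivAt stdNormalCDF (stdNormalPDF x) x := by
  rw [funext stdNormalCDF_eq_add_intervalIntegral]
  exact (intervalIntegral.integral_hasDerivAt_right
    integrable_stdNormalPDF.intervalIntegrable
    (differentiable_stdNormalPDF.continuous.stronglyMeasurableAtFilter _ _)
    differentiable_stdNormalPDF.continuous.continuousAt).const_add _

@[fun_prop]
lemma differentiable_stdNormalCDF : Differentiable ℝ stdNormalCDF :=
  fun x => (hasDerivAt_stdNormalCDF x).differentiableAt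

lemma stdNormalCDF_pos (x : ℝ) : 0 < stdNormalCDF x := by
  have hsupp : Function.support stdNormalPDF = Set.univ :=
    Function.support_eq_univ fun t => (stdNormalPDF_pos t).ne'
  rw [stdNormalCDF, setIntegral_pos_iff_support_of_nonneg_ae
    (.of_forall fun t => (stdNormalPDF_pos t).le) integrable_stdNormalPDF.integrableOn,
    hsupp, Set.univ_inter]
  simp [Real.volume_Iio]

section

variable {E ι : Type*} [NormedAddCommGroup E] [NormedSpace ℝ E] [Fintype ι]
  {f g : E → ι → ℝ} {x : E}

@[fun_prop]
theorem DifferentiableAt.dotProduct (hf : DifferentiableAt ℝ f x) (hg : DifferentiableAt ℝ g x) :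
    DifferentiableAt ℝ (fun y => f y ⬝ᵥ g y) x := by
  unfold _root_.dotProduct
  fun_prop

@[fun_prop]
theorem DifferentiableAt.mulVec {κ : Type*} (A : Matrix κ ι ℝ) (hf : DifferentiableAt ℝ f x) :
    DifferentiableAt ℝ (fun y => A *ᵥ f y) x := by
  unfold Matrix.mulVec
  fun_prop

end

theorem Function.Even.hasFDerivAt_zero {E F : Type*} [NormedAddCommGroup E] [NormedSpace ℝ E]
    [NormedAddCommGroup F] [NormedSpace ℝ F] {f : E → F} (hf : Function.Even f)
    (hd : DifferentiableAt ℝ f 0) : HasFDerivAt f (0 : E →L[ℝ] F) 0 := by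
  set L := fderiv ℝ f 0
  have hL : HasFDerivAt f L 0 := hd.hasFDerivAt
  have hneg : HasFDerivAt f (-L) 0 := by
    have := (neg_zero (G := E) ▸ hL).comp 0 (hasFDerivAt_id (𝕜 := ℝ) (0 : E)).neg
    rwa [ContinuousLinearMap.comp_neg, ContinuousLinearMap.comp_id,
      show f ∘ Neg.neg = f from funext hf] at this
  have h2 : (2 : ℝ) • L = 0 := by
    rw [two_smul]
    nth_rewrite 2 [hL.unique hneg]
    exact add_neg_cancel L
  rwa [(smul_eq_zero.1 h2).resolve_left two_ne_zero] at hL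

section

variable (d : ℕ) (C : Matrix (Fin d) (Fin d) ℝ) (a : Fin d → ℝ) (σU σV g m : ℝ) (ε : ℝ)

lemma densF_neg (ρ : Fin d → ℝ) : densF d C a σU σV g m (-ρ) ε = densF d C a σU σV g m ρ ε := by
  simp only [densF, mulVec_neg, neg_dotProduct, dotProduct_neg, neg_neg, mul_neg, neg_div]
  ring_nf

lemma densF_pos (hσV : 0 < σV) (ρ : Fin d → ℝ) : 0 < densF d C a σU σV g m ρ ε := by
  simp only [densF]
  exact mul_pos (by positivity) (add_pos (mul_pos (stdNormalCDF_pos _) (stdNormalPDF_pos _))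
    (mul_pos (stdNormalCDF_pos _) (stdNormalPDF_pos _)))

lemma differentiableAt_densF_zero (hσU : 0 < σU) (hσV : 0 < σV) (hg : 0 < g) :
    DifferentiableAt ℝ (fun ρ : Fin d → ℝ => densF d C a σU σV g m ρ ε) 0 := by
  dsimp only [densF]
  -- at `ρ = 0` every square-root argument and denominator is a positive expression in σU, σV, g
  fun_prop (disch := simp only [zero_dotProduct, sub_zero, Real.sqrt_one, mul_one]; positivity)

end

theorem score_vanishes_at_zero_general
    (d : ℕ)
    (C : Matrix (Fin d) (Fin d) ℝ)
    (a : Fin d → ℝ) (σU σV g m : ℝ)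
    (hσU : 0 < σU) (hσV : 0 < σV) (hg : 0 < g) :
    ∀ ε : ℝ,
      HasFDerivAt (fun ρ : Fin d → ℝ => Real.log (densF d C a σU σV g m ρ ε))
        (0 : (Fin d → ℝ) →L[ℝ] ℝ) 0 := fun ε =>
  Function.Even.hasFDerivAt_zero (fun ρ => by rw [densF_neg])
    ((differentiableAt_densF_zero d C a σU σV g m ε hσU hσV hg).log
      (densF_pos d C a σU σV g m ε hσV 0).ne')

/-- the score of the log-likelihood with respect to the dependence parameter
`ρ_U` vanishes identically at `ρ_U = 0`: for every `ε` the map `ρ ↦ log f(ε; ρ)` is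
differentiable at `ρ = 0` with zero (Fréchet) derivative, i.e. zero gradient. -/
theorem score_vanishes_at_zero
    (d : ℕ) (hd : 1 ≤ d)
    (C : Matrix (Fin d) (Fin d) ℝ) (hC : C.PosDef)
    (a : Fin d → ℝ) (σU σV g m : ℝ)
    (hσU : 0 < σU) (hσV : 0 < σV) (hg : 0 < g) :
    ∀ ε : ℝ,
      HasFDerivAt (fun ρ : Fin d → ℝ => Real.log (densF d C a σU σV g m ρ ε))
        (0 : (Fin d → ℝ) →L[ℝ] ℝ) 0 :=
  score_vanishes_at_zero_general d C a σU σV g m hσU hσV hg
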